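/- Fix an integer n ≥ 1 and real numbers λ, ξ with ξ ≥ n·|λ| and ξ + λ² > 0, and let a = √(ξ+λ²+n²/4). Then the three vectors v₀ = (ξ+λ²)^{−1/2}·(√((ξ−nλ)/2), √((ξ+nλ)/2), iλ)ᵀ, v₊ = (2a(a+n/2))^{−1/2}·(−i·√(((a+n/2−λ)(a−n/2−λ))/2), i·√(((a+n/2+λ)(a−n/2+λ))/2), √((a+n/2+λ)(a+n/2−λ)))ᵀ, and v₋ = (2a(a−n/2))^{−1/2}·(i·√(((a+n/2+λ)(a−n/2+λ))/2), −i·√(((a+n/2−λ)(a−n/2−λ))/2), √((a−n/2+λ)(a−n/2−λ)))ᵀ form an orthonormal basis of ℂ³; consequently the rank-one matrices p₀ = v₀v₀*, p₊ = v₊v₊*, p₋ = v₋v₋* are pairwise orthogonal orthogonal projections with p₀ + p₊ + p₋ = I₃, and every entry of each of p₀, p₊, p₋ has modulus at most 1. -/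

import Mathlib

open Complex Matrix

/-- The matrix `m₁ = m₁(λ,ξ)` of Lemma 5.2, with rows
`(−λ, 0, −i√((ξ−nλ)/2))`, `(0, λ, i√((ξ+nλ)/2))`, `(i√((ξ−nλ)/2), −i√((ξ+nλ)/2), n)`. -/
noncomputable def m1 (n : ℕ) (lam ξ : ℝ) : Matrix (Fin 3) (Fin 3) ℂ :=
  !![(-lam : ℂ), 0, -Complex.I * (Real.sqrt ((ξ - n * lam) / 2) : ℂ);
     0, (lam : ℂ), Complex.I * (Real.sqrt ((ξ + n * lam) / 2) : ℂ);
     Complex.I * (Real.sqrt ((ξ - n * lam) / 2) : ℂ),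
       -Complex.I * (Real.sqrt ((ξ + n * lam) / 2) : ℂ), (n : ℂ)]

/-- The unit eigenvector `v₀ = (ξ+λ²)^{−1/2}·(√((ξ−nλ)/2), √((ξ+nλ)/2), iλ)ᵀ`. -/
noncomputable def v0 (n : ℕ) (lam ξ : ℝ) : Fin 3 → ℂ :=
  ((Real.sqrt (ξ + lam ^ 2) : ℂ))⁻¹ •
    ![(Real.sqrt ((ξ - n * lam) / 2) : ℂ),
      (Real.sqrt ((ξ + n * lam) / 2) : ℂ),
      Complex.I * (lam : ℂ)]

/-- The unit eigenvector `v₊` of `m₁` for the eigenvalue `n/2 + a`. -/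
noncomputable def vplus (n : ℕ) (lam ξ : ℝ) : Fin 3 → ℂ :=
  ((Real.sqrt (2 * Real.sqrt (ξ + lam ^ 2 + (n : ℝ) ^ 2 / 4) *
      (Real.sqrt (ξ + lam ^ 2 + (n : ℝ) ^ 2 / 4) + n / 2)) : ℂ))⁻¹ •
    ![-Complex.I * (Real.sqrt ((Real.sqrt (ξ + lam ^ 2 + (n : ℝ) ^ 2 / 4) + n / 2 - lam) *
        (Real.sqrt (ξ + lam ^ 2 + (n : ℝ) ^ 2 / 4) - n / 2 - lam) / 2) : ℂ),
      Complex.I * (Real.sqrt ((Real.sqrt (ξ + lam ^ 2 + (n : ℝ) ^ 2 / 4) + n / 2 + lam) *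
        (Real.sqrt (ξ + lam ^ 2 + (n : ℝ) ^ 2 / 4) - n / 2 + lam) / 2) : ℂ),
      (Real.sqrt ((Real.sqrt (ξ + lam ^ 2 + (n : ℝ) ^ 2 / 4) + n / 2 + lam) *
        (Real.sqrt (ξ + lam ^ 2 + (n : ℝ) ^ 2 / 4) + n / 2 - lam)) : ℂ)]

/-- The unit eigenvector `v₋` of `m₁` for the eigenvalue `n/2 − a`. -/
noncomputable def vminus (n : ℕ) (lam ξ : ℝ) : Fin 3 → ℂ :=
  ((Real.sqrt (2 * Real.sqrt (ξ + lam ^ 2 + (n : ℝ) ^ 2 / 4) *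
      (Real.sqrt (ξ + lam ^ 2 + (n : ℝ) ^ 2 / 4) - n / 2)) : ℂ))⁻¹ •
    ![Complex.I * (Real.sqrt ((Real.sqrt (ξ + lam ^ 2 + (n : ℝ) ^ 2 / 4) + n / 2 + lam) *
        (Real.sqrt (ξ + lam ^ 2 + (n : ℝ) ^ 2 / 4) - n / 2 + lam) / 2) : ℂ),
      -Complex.I * (Real.sqrt ((Real.sqrt (ξ + lam ^ 2 + (n : ℝ) ^ 2 / 4) + n / 2 - lam) *
        (Real.sqrt (ξ + lam ^ 2 + (n : ℝ) ^ 2 / 4) - n / 2 - lam) / 2) : ℂ),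
      (Real.sqrt ((Real.sqrt (ξ + lam ^ 2 + (n : ℝ) ^ 2 / 4) - n / 2 + lam) *
        (Real.sqrt (ξ + lam ^ 2 + (n : ℝ) ^ 2 / 4) - n / 2 - lam)) : ℂ)]

/-- The rank-one matrix `v v*`. -/
noncomputable def projOf (v : Fin 3 → ℂ) : Matrix (Fin 3) (Fin 3) ℂ :=
  Matrix.vecMulVec v (star v)

set_option linter.unusedSectionVars false

section KeyRing
lemma sqrt_helper (x y c z : ℝ) (hx : 0 ≤ x) (hc : 0 ≤ c) (hkey : x * y = c ^ 2 * z) :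
    Real.sqrt x * Real.sqrt y = c * Real.sqrt z := by
  rw [← Real.sqrt_mul hx, hkey, Real.sqrt_mul (sq_nonneg c), Real.sqrt_sq hc]

lemma key1 (A lam ξ v : ℝ) (hA : A ^ 2 = ξ + lam ^ 2 + v ^ 2) :
    (ξ - 2 * v * lam) / 2 * ((A + v - lam) * (A - v - lam) / 2)
      = ((A - v - lam) / 2) ^ 2 * ((A + v + lam) * (A + v - lam)) := by
  have hx : ξ = A ^ 2 - lam ^ 2 - v ^ 2 := by linarith
  subst hx; ring

lemma key2 (A lam ξ v : ℝ) (hA : A ^ 2 = ξ + lam ^ 2 + v ^ 2) :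
    (ξ + 2 * v * lam) / 2 * ((A + v + lam) * (A - v + lam) / 2)
      = ((A - v + lam) / 2) ^ 2 * ((A + v + lam) * (A + v - lam)) := by
  have hx : ξ = A ^ 2 - lam ^ 2 - v ^ 2 := by linarith
  subst hx; ring

lemma key3 (A lam ξ v : ℝ) (hA : A ^ 2 = ξ + lam ^ 2 + v ^ 2) :
    (ξ - 2 * v * lam) / 2 * ((A + v + lam) * (A - v + lam) / 2)
      = ((A + v + lam) / 2) ^ 2 * ((A - v + lam) * (A - v - lam)) := by
  have hx : ξ = A ^ 2 - lam ^ 2 - v ^ 2 := by linarith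
  subst hx; ring

lemma key4 (A lam ξ v : ℝ) (hA : A ^ 2 = ξ + lam ^ 2 + v ^ 2) :
    (ξ + 2 * v * lam) / 2 * ((A + v - lam) * (A - v - lam) / 2)
      = ((A + v - lam) / 2) ^ 2 * ((A - v + lam) * (A - v - lam)) := by
  have hx : ξ = A ^ 2 - lam ^ 2 - v ^ 2 := by linarith
  subst hx; ring

lemma key5 (A lam v : ℝ) :
    ((A + v - lam) * (A - v - lam) / 2) * ((A + v + lam) * (A - v + lam) / 2)
      = (1 / 2) ^ 2 * (((A + v + lam) * (A + v - lam)) * ((A - v + lam) * (A - v - lam))) := by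
  ring
end KeyRing

section Facts
variable (n : ℕ) (lam ξ : ℝ)

lemma facts (hn : 1 ≤ n) (h : (n : ℝ) * |lam| ≤ ξ) (hpos : 0 < ξ + lam ^ 2) :
    0 ≤ ξ ∧ (Real.sqrt (ξ + lam ^ 2 + (n : ℝ) ^ 2 / 4)) ^ 2 = ξ + lam ^ 2 + (n : ℝ) ^ 2 / 4 ∧
    0 < Real.sqrt (ξ + lam ^ 2 + (n : ℝ) ^ 2 / 4) ∧
    (n : ℝ) / 2 < Real.sqrt (ξ + lam ^ 2 + (n : ℝ) ^ 2 / 4) ∧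
    (n : ℝ) / 2 + lam ≤ Real.sqrt (ξ + lam ^ 2 + (n : ℝ) ^ 2 / 4) ∧
    (n : ℝ) / 2 - lam ≤ Real.sqrt (ξ + lam ^ 2 + (n : ℝ) ^ 2 / 4) ∧
    (n : ℝ) * lam ≤ ξ ∧ -((n : ℝ) * lam) ≤ ξ := by
  have hn1 : (1 : ℝ) ≤ n := by exact_mod_cast hn
  have hml : (n : ℝ) * lam ≤ ξ := by nlinarith [le_abs_self lam]
  have hpl : -((n : ℝ) * lam) ≤ ξ := by nlinarith [neg_abs_le lam]
  have hx0 : 0 ≤ ξ := le_trans (by positivity) h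
  have harg : (0:ℝ) < ξ + lam ^ 2 + (n : ℝ) ^ 2 / 4 := by positivity
  have ha2 : (Real.sqrt (ξ + lam ^ 2 + (n : ℝ) ^ 2 / 4)) ^ 2 = ξ + lam ^ 2 + (n : ℝ) ^ 2 / 4 :=
    Real.sq_sqrt harg.le
  have ha0 : 0 < Real.sqrt (ξ + lam ^ 2 + (n : ℝ) ^ 2 / 4) := Real.sqrt_pos.2 harg
  refine ⟨hx0, ha2, ha0, ?_, ?_, ?_, hml, hpl⟩
  · have h3 : Real.sqrt (((n:ℝ)/2)^2) < Real.sqrt (ξ + lam ^ 2 + (n : ℝ) ^ 2 / 4) :=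
      Real.sqrt_lt_sqrt (by positivity) (by nlinarith)
    calc (n:ℝ)/2 = Real.sqrt (((n:ℝ)/2)^2) := by rw [Real.sqrt_sq (by positivity)]
      _ < _ := h3
  · have h3 : Real.sqrt (((n:ℝ)/2 + lam)^2) ≤ Real.sqrt (ξ + lam ^ 2 + (n : ℝ) ^ 2 / 4) :=
      Real.sqrt_le_sqrt (by nlinarith)
    calc (n:ℝ)/2 + lam ≤ |(n:ℝ)/2 + lam| := le_abs_self _
      _ = Real.sqrt (((n:ℝ)/2 + lam)^2) := (Real.sqrt_sq_eq_abs _).symm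
      _ ≤ _ := h3
  · have h3 : Real.sqrt (((n:ℝ)/2 - lam)^2) ≤ Real.sqrt (ξ + lam ^ 2 + (n : ℝ) ^ 2 / 4) :=
      Real.sqrt_le_sqrt (by nlinarith)
    calc (n:ℝ)/2 - lam ≤ |(n:ℝ)/2 - lam| := le_abs_self _
      _ = Real.sqrt (((n:ℝ)/2 - lam)^2) := (Real.sqrt_sq_eq_abs _).symm
      _ ≤ _ := h3
end Facts

lemma dot_0p (n : ℕ) (lam ξ : ℝ) (hn : 1 ≤ n) (h : (n : ℝ) * |lam| ≤ ξ)
    (hpos : 0 < ξ + lam ^ 2) : star (v0 n lam ξ) ⬝ᵥ vplus n lam ξ = 0 := by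
  obtain ⟨hx0, ha2, ha0, hna, hpl, hml, hm1, hm2⟩ := facts n lam ξ hn h hpos
  simp only [v0, vplus, dotProduct, Fin.sum_univ_three, Pi.smul_apply, Pi.star_apply,
    Matrix.cons_val_zero, Matrix.cons_val_one, Matrix.head_cons, Matrix.cons_val_two,
    Matrix.tail_cons, smul_eq_mul, Complex.star_def, map_inv₀, Complex.conj_ofReal,
    Complex.conj_I, _root_.map_mul, map_neg]
  set a := Real.sqrt (ξ + lam ^ 2 + (n : ℝ) ^ 2 / 4) with hadef
  have er1 : Real.sqrt ((ξ - n * lam) / 2) *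
      Real.sqrt ((a + n / 2 - lam) * (a - n / 2 - lam) / 2)
      = (a - n / 2 - lam) / 2 * Real.sqrt ((a + n / 2 + lam) * (a + n / 2 - lam)) :=
    sqrt_helper _ _ _ _ (by linarith) (by linarith)
      (by linear_combination key1 a lam ξ ((n:ℝ)/2) (by linear_combination ha2))
  have er2 : Real.sqrt ((ξ + n * lam) / 2) *
      Real.sqrt ((a + n / 2 + lam) * (a - n / 2 + lam) / 2)
      = (a - n / 2 + lam) / 2 * Real.sqrt ((a + n / 2 + lam) * (a + n / 2 - lam)) :=
    sqrt_helper _ _ _ _ (by linarith) (by linarith)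
      (by linear_combination key2 a lam ξ ((n:ℝ)/2) (by linear_combination ha2))
  linear_combination (norm := (push_cast; ring1))
    ((Real.sqrt (ξ + lam ^ 2) : ℂ))⁻¹ *
      ((Real.sqrt (2 * a * (a + n / 2)) : ℂ))⁻¹ * (-Complex.I) *
        (congrArg (Complex.ofReal) er1) +
    ((Real.sqrt (ξ + lam ^ 2) : ℂ))⁻¹ *
      ((Real.sqrt (2 * a * (a + n / 2)) : ℂ))⁻¹ * Complex.I *
        (congrArg (Complex.ofReal) er2)

lemma dot_0m (n : ℕ) (lam ξ : ℝ) (hn : 1 ≤ n) (h : (n : ℝ) * |lam| ≤ ξ)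
    (hpos : 0 < ξ + lam ^ 2) : star (v0 n lam ξ) ⬝ᵥ vminus n lam ξ = 0 := by
  obtain ⟨hx0, ha2, ha0, hna, hpl, hml, hm1, hm2⟩ := facts n lam ξ hn h hpos
  simp only [v0, vminus, dotProduct, Fin.sum_univ_three, Pi.smul_apply, Pi.star_apply,
    Matrix.cons_val_zero, Matrix.cons_val_one, Matrix.head_cons, Matrix.cons_val_two,
    Matrix.tail_cons, smul_eq_mul, Complex.star_def, map_inv₀, Complex.conj_ofReal,
    Complex.conj_I, _root_.map_mul, map_neg]
  set a := Real.sqrt (ξ + lam ^ 2 + (n : ℝ) ^ 2 / 4) with hadef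
  have er3 : Real.sqrt ((ξ - n * lam) / 2) *
      Real.sqrt ((a + n / 2 + lam) * (a - n / 2 + lam) / 2)
      = (a + n / 2 + lam) / 2 * Real.sqrt ((a - n / 2 + lam) * (a - n / 2 - lam)) :=
    sqrt_helper _ _ _ _ (by linarith) (by linarith)
      (by linear_combination key3 a lam ξ ((n:ℝ)/2) (by linear_combination ha2))
  have er4 : Real.sqrt ((ξ + n * lam) / 2) *
      Real.sqrt ((a + n / 2 - lam) * (a - n / 2 - lam) / 2)
      = (a + n / 2 - lam) / 2 * Real.sqrt ((a - n / 2 + lam) * (a - n / 2 - lam)) :=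
    sqrt_helper _ _ _ _ (by linarith) (by linarith)
      (by linear_combination key4 a lam ξ ((n:ℝ)/2) (by linear_combination ha2))
  linear_combination (norm := (push_cast; ring1))
    ((Real.sqrt (ξ + lam ^ 2) : ℂ))⁻¹ *
      ((Real.sqrt (2 * a * (a - n / 2)) : ℂ))⁻¹ * Complex.I *
        (congrArg (Complex.ofReal) er3) +
    ((Real.sqrt (ξ + lam ^ 2) : ℂ))⁻¹ *
      ((Real.sqrt (2 * a * (a - n / 2)) : ℂ))⁻¹ * (-Complex.I) *
        (congrArg (Complex.ofReal) er4)

lemma dot_pm (n : ℕ) (lam ξ : ℝ) (hn : 1 ≤ n) (h : (n : ℝ) * |lam| ≤ ξ)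
    (hpos : 0 < ξ + lam ^ 2) : star (vplus n lam ξ) ⬝ᵥ vminus n lam ξ = 0 := by
  obtain ⟨hx0, ha2, ha0, hna, hpl, hml, hm1, hm2⟩ := facts n lam ξ hn h hpos
  simp only [vplus, vminus, dotProduct, Fin.sum_univ_three, Pi.smul_apply, Pi.star_apply,
    Matrix.cons_val_zero, Matrix.cons_val_one, Matrix.head_cons, Matrix.cons_val_two,
    Matrix.tail_cons, smul_eq_mul, Complex.star_def, map_inv₀, Complex.conj_ofReal,
    Complex.conj_I, _root_.map_mul, map_neg]
  set a := Real.sqrt (ξ + lam ^ 2 + (n : ℝ) ^ 2 / 4) with hadef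
  have hC0 : 0 ≤ (a + n / 2 + lam) * (a + n / 2 - lam) :=
    mul_nonneg (by linarith) (by linarith)
  have e5a := sqrt_helper ((a + n / 2 - lam) * (a - n / 2 - lam) / 2)
    ((a + n / 2 + lam) * (a - n / 2 + lam) / 2) (1/2)
    (((a + n / 2 + lam) * (a + n / 2 - lam)) * ((a - n / 2 + lam) * (a - n / 2 - lam)))
    (by have := mul_nonneg (show (0:ℝ) ≤ a + n / 2 - lam by linarith) (show (0:ℝ) ≤ a - n / 2 - lam by linarith); linarith) (by norm_num) (key5 a lam ((n:ℝ)/2))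
  have er5 : Real.sqrt ((a + n / 2 - lam) * (a - n / 2 - lam) / 2) *
      Real.sqrt ((a + n / 2 + lam) * (a - n / 2 + lam) / 2)
      = Real.sqrt ((a + n / 2 + lam) * (a + n / 2 - lam)) *
        Real.sqrt ((a - n / 2 + lam) * (a - n / 2 - lam)) / 2 := by
    rw [e5a, Real.sqrt_mul hC0]; ring
  linear_combination (norm := (push_cast; ring1))
    (-2 : ℂ) * ((Real.sqrt (2 * a * (a + n / 2)) : ℂ))⁻¹ *
      ((Real.sqrt (2 * a * (a - n / 2)) : ℂ))⁻¹ * (congrArg (Complex.ofReal) er5) +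
    ((Real.sqrt (2 * a * (a + n / 2)) : ℂ))⁻¹ *
      ((Real.sqrt (2 * a * (a - n / 2)) : ℂ))⁻¹ *
      ((Real.sqrt ((a + n / 2 - lam) * (a - n / 2 - lam) / 2) : ℂ) *
        (Real.sqrt ((a + n / 2 + lam) * (a - n / 2 + lam) / 2) : ℂ)) * (2 : ℂ) * Complex.I_sq

lemma dot_00 (n : ℕ) (lam ξ : ℝ) (hn : 1 ≤ n) (h : (n : ℝ) * |lam| ≤ ξ)
    (hpos : 0 < ξ + lam ^ 2) : star (v0 n lam ξ) ⬝ᵥ v0 n lam ξ = 1 := by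
  obtain ⟨hx0, ha2, ha0, hna, hpl, hml, hm1, hm2⟩ := facts n lam ξ hn h hpos
  simp only [v0, dotProduct, Fin.sum_univ_three, Pi.smul_apply, Pi.star_apply,
    Matrix.cons_val_zero, Matrix.cons_val_one, Matrix.head_cons, Matrix.cons_val_two,
    Matrix.tail_cons, smul_eq_mul, Complex.star_def, map_inv₀, Complex.conj_ofReal,
    Complex.conj_I, _root_.map_mul, map_neg]
  set c : ℂ := ((Real.sqrt (ξ + lam ^ 2) : ℝ) : ℂ) with hc
  have hs : c ≠ 0 := by
    rw [hc]; exact_mod_cast Complex.ofReal_ne_zero.2 (Real.sqrt_pos.2 hpos).ne'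
  have hinv : c⁻¹ * c = 1 := inv_mul_cancel₀ hs
  have s1 := congrArg Complex.ofReal
    (Real.mul_self_sqrt (show (0:ℝ) ≤ (ξ - n * lam) / 2 by linarith))
  have s2 := congrArg Complex.ofReal
    (Real.mul_self_sqrt (show (0:ℝ) ≤ (ξ + n * lam) / 2 by linarith))
  have s0 : c * c = ((ξ : ℂ) + (lam:ℂ) ^ 2) := by
    rw [hc, ← Complex.ofReal_mul, Real.mul_self_sqrt hpos.le]; push_cast; ring
  linear_combination (norm := (push_cast; ring1))
    c⁻¹ * c⁻¹ * s1 + c⁻¹ * c⁻¹ * s2 + (-(lam:ℂ)^2 * c⁻¹ * c⁻¹) * Complex.I_sq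
      + (-c⁻¹ * c⁻¹) * s0 + (c⁻¹ * c + 1) * hinv

lemma dot_pp (n : ℕ) (lam ξ : ℝ) (hn : 1 ≤ n) (h : (n : ℝ) * |lam| ≤ ξ)
    (hpos : 0 < ξ + lam ^ 2) : star (vplus n lam ξ) ⬝ᵥ vplus n lam ξ = 1 := by
  obtain ⟨hx0, ha2, ha0, hna, hpl, hml, hm1, hm2⟩ := facts n lam ξ hn h hpos
  simp only [vplus, dotProduct, Fin.sum_univ_three, Pi.smul_apply, Pi.star_apply,
    Matrix.cons_val_zero, Matrix.cons_val_one, Matrix.head_cons, Matrix.cons_val_two,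
    Matrix.tail_cons, smul_eq_mul, Complex.star_def, map_inv₀, Complex.conj_ofReal,
    Complex.conj_I, _root_.map_mul, map_neg]
  set a := Real.sqrt (ξ + lam ^ 2 + (n : ℝ) ^ 2 / 4) with hadef
  have hN : (0:ℝ) < 2 * a * (a + n / 2) := by
    have : (0:ℝ) < a + n / 2 := by positivity
    positivity
  set c : ℂ := ((Real.sqrt (2 * a * (a + n / 2)) : ℝ) : ℂ) with hc
  have hs : c ≠ 0 := by
    rw [hc]; exact_mod_cast Complex.ofReal_ne_zero.2 (Real.sqrt_pos.2 hN).ne'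
  have hinv : c⁻¹ * c = 1 := inv_mul_cancel₀ hs
  have sA := congrArg Complex.ofReal (Real.mul_self_sqrt
    (show (0:ℝ) ≤ (a + n / 2 - lam) * (a - n / 2 - lam) / 2 by
      have := mul_nonneg (show (0:ℝ) ≤ a + n/2 - lam by linarith)
        (show (0:ℝ) ≤ a - n/2 - lam by linarith); linarith))
  have sB := congrArg Complex.ofReal (Real.mul_self_sqrt
    (show (0:ℝ) ≤ (a + n / 2 + lam) * (a - n / 2 + lam) / 2 by
      have := mul_nonneg (show (0:ℝ) ≤ a + n/2 + lam by linarith)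
        (show (0:ℝ) ≤ a - n/2 + lam by linarith); linarith))
  have sC := congrArg Complex.ofReal (Real.mul_self_sqrt
    (show (0:ℝ) ≤ (a + n / 2 + lam) * (a + n / 2 - lam) by
      exact mul_nonneg (by linarith) (by linarith)))
  have s0 : c * c = 2 * (a:ℂ) * ((a:ℂ) + (n:ℂ) / 2) := by
    rw [hc, ← Complex.ofReal_mul, Real.mul_self_sqrt hN.le]; push_cast; ring
  linear_combination (norm := (push_cast; ring1))
    (- c⁻¹ * c⁻¹ * Complex.I ^ 2) * sA + (- c⁻¹ * c⁻¹ * Complex.I ^ 2) * sB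
      + (c⁻¹ * c⁻¹) * sC
      + (- c⁻¹ * c⁻¹ * (((a:ℂ) + (n:ℂ)/2 - (lam:ℂ)) * ((a:ℂ) - (n:ℂ)/2 - (lam:ℂ)) / 2
          + ((a:ℂ) + (n:ℂ)/2 + (lam:ℂ)) * ((a:ℂ) - (n:ℂ)/2 + (lam:ℂ)) / 2)) * Complex.I_sq
      + (- c⁻¹ * c⁻¹) * s0 + (c⁻¹ * c + 1) * hinv

lemma dot_mm (n : ℕ) (lam ξ : ℝ) (hn : 1 ≤ n) (h : (n : ℝ) * |lam| ≤ ξ)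
    (hpos : 0 < ξ + lam ^ 2) : star (vminus n lam ξ) ⬝ᵥ vminus n lam ξ = 1 := by
  obtain ⟨hx0, ha2, ha0, hna, hpl, hml, hm1, hm2⟩ := facts n lam ξ hn h hpos
  simp only [vminus, dotProduct, Fin.sum_univ_three, Pi.smul_apply, Pi.star_apply,
    Matrix.cons_val_zero, Matrix.cons_val_one, Matrix.head_cons, Matrix.cons_val_two,
    Matrix.tail_cons, smul_eq_mul, Complex.star_def, map_inv₀, Complex.conj_ofReal,
    Complex.conj_I, _root_.map_mul, map_neg]
  set a := Real.sqrt (ξ + lam ^ 2 + (n : ℝ) ^ 2 / 4) with hadef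
  have hN : (0:ℝ) < 2 * a * (a - n / 2) := by
    have h1 : (0:ℝ) < a - n / 2 := by linarith
    positivity
  set c : ℂ := ((Real.sqrt (2 * a * (a - n / 2)) : ℝ) : ℂ) with hc
  have hs : c ≠ 0 := by
    rw [hc]; exact_mod_cast Complex.ofReal_ne_zero.2 (Real.sqrt_pos.2 hN).ne'
  have hinv : c⁻¹ * c = 1 := inv_mul_cancel₀ hs
  have sA := congrArg Complex.ofReal (Real.mul_self_sqrt
    (show (0:ℝ) ≤ (a + n / 2 - lam) * (a - n / 2 - lam) / 2 by
      have := mul_nonneg (show (0:ℝ) ≤ a + n/2 - lam by linarith)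
        (show (0:ℝ) ≤ a - n/2 - lam by linarith); linarith))
  have sB := congrArg Complex.ofReal (Real.mul_self_sqrt
    (show (0:ℝ) ≤ (a + n / 2 + lam) * (a - n / 2 + lam) / 2 by
      have := mul_nonneg (show (0:ℝ) ≤ a + n/2 + lam by linarith)
        (show (0:ℝ) ≤ a - n/2 + lam by linarith); linarith))
  have sD := congrArg Complex.ofReal (Real.mul_self_sqrt
    (show (0:ℝ) ≤ (a - n / 2 + lam) * (a - n / 2 - lam) by
      exact mul_nonneg (by linarith) (by linarith)))
  have s0 : c * c = 2 * (a:ℂ) * ((a:ℂ) - (n:ℂ) / 2) := by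
    rw [hc, ← Complex.ofReal_mul, Real.mul_self_sqrt hN.le]; push_cast; ring
  linear_combination (norm := (push_cast; ring1))
    (- c⁻¹ * c⁻¹ * Complex.I ^ 2) * sA + (- c⁻¹ * c⁻¹ * Complex.I ^ 2) * sB
      + (c⁻¹ * c⁻¹) * sD
      + (- c⁻¹ * c⁻¹ * (((a:ℂ) + (n:ℂ)/2 - (lam:ℂ)) * ((a:ℂ) - (n:ℂ)/2 - (lam:ℂ)) / 2
          + ((a:ℂ) + (n:ℂ)/2 + (lam:ℂ)) * ((a:ℂ) - (n:ℂ)/2 + (lam:ℂ)) / 2)) * Complex.I_sq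
      + (- c⁻¹ * c⁻¹) * s0 + (c⁻¹ * c + 1) * hinv

lemma dot_swap (v w : Fin 3 → ℂ) : star w ⬝ᵥ v = star (star v ⬝ᵥ w) := by
  simp only [dotProduct, star_sum, star_mul', star_star, Pi.star_apply]
  exact Finset.sum_congr rfl fun k _ => by ring

lemma projOf_mul (v w : Fin 3 → ℂ) :
    projOf v * projOf w = (star v ⬝ᵥ w) • Matrix.vecMulVec v (star w) := by
  ext i j
  simp only [projOf, Matrix.mul_apply, Matrix.vecMulVec_apply, Matrix.smul_apply,
    dotProduct, Pi.star_apply, smul_eq_mul, Finset.sum_mul]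
  exact Finset.sum_congr rfl fun k _ => by ring

lemma projOf_herm (v : Fin 3 → ℂ) : (projOf v).IsHermitian := by
  ext i j
  simp only [projOf, Matrix.conjTranspose_apply, Matrix.vecMulVec_apply, Pi.star_apply,
    star_mul', star_star]
  ring

lemma entry_bound (v : Fin 3 → ℂ) (hv : star v ⬝ᵥ v = 1) (i j : Fin 3) :
    ‖projOf v i j‖ ≤ 1 := by
  have h' : ((Complex.normSq (v 0) + Complex.normSq (v 1) + Complex.normSq (v 2) : ℝ) : ℂ)
      = 1 := by
    rw [← hv]
    simp only [dotProduct, Fin.sum_univ_three, Pi.star_apply, Complex.star_def]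
    push_cast [Complex.normSq_eq_conj_mul_self]
    ring
  have h1 : Complex.normSq (v 0) + Complex.normSq (v 1) + Complex.normSq (v 2) = 1 := by
    exact_mod_cast h'
  have hb : ∀ k : Fin 3, ‖v k‖ ≤ 1 := by
    intro k
    have hn : Complex.normSq (v k) ≤ 1 := by
      have n0 := Complex.normSq_nonneg (v 0)
      have n1 := Complex.normSq_nonneg (v 1)
      have n2 := Complex.normSq_nonneg (v 2)
      fin_cases k
      · show Complex.normSq (v 0) ≤ 1; nlinarith
      · show Complex.normSq (v 1) ≤ 1; nlinarith
      · show Complex.normSq (v 2) ≤ 1; nlinarith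
    rw [Complex.norm_def]
    calc Real.sqrt (Complex.normSq (v k)) ≤ Real.sqrt 1 := Real.sqrt_le_sqrt hn
      _ = 1 := Real.sqrt_one
  have : ‖projOf v i j‖ = ‖v i‖ * ‖v j‖ := by
    simp [projOf, Matrix.vecMulVec_apply]
  rw [this]
  exact mul_le_one₀ (hb i) (norm_nonneg _) (hb j)

set_option maxHeartbeats 2000000 in
/-- Lemma 5.2 / Proposition 5.3, matrix form: for `ξ ≥ n|λ|` and
`ξ + λ² > 0`, the vectors `v₀, v₊, v₋` form an orthonormal basis of `ℂ³`, the rank-one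
matrices `p₀ = v₀v₀*`, `p₊ = v₊v₊*`, `p₋ = v₋v₋*` are pairwise orthogonal Hermitian
idempotents summing to the identity, and every entry of `p₀, p₊, p₋` has modulus `≤ 1`. -/
theorem stmt_9 (n : ℕ) (hn : 1 ≤ n) (lam ξ : ℝ) (h : (n : ℝ) * |lam| ≤ ξ)
    (hpos : 0 < ξ + lam ^ 2) :
    (Orthonormal ℂ
        ![(WithLp.equiv 2 (Fin 3 → ℂ)).symm (v0 n lam ξ),
          (WithLp.equiv 2 (Fin 3 → ℂ)).symm (vplus n lam ξ),
          (WithLp.equiv 2 (Fin 3 → ℂ)).symm (vminus n lam ξ)] ∧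
      Submodule.span ℂ
          (Set.range
            ![(WithLp.equiv 2 (Fin 3 → ℂ)).symm (v0 n lam ξ),
              (WithLp.equiv 2 (Fin 3 → ℂ)).symm (vplus n lam ξ),
              (WithLp.equiv 2 (Fin 3 → ℂ)).symm (vminus n lam ξ)]) = ⊤) ∧
    (projOf (v0 n lam ξ) + projOf (vplus n lam ξ) + projOf (vminus n lam ξ) = 1 ∧
      projOf (v0 n lam ξ) * projOf (vplus n lam ξ) = 0 ∧
      projOf (vplus n lam ξ) * projOf (v0 n lam ξ) = 0 ∧
      projOf (v0 n lam ξ) * projOf (vminus n lam ξ) = 0 ∧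
      projOf (vminus n lam ξ) * projOf (v0 n lam ξ) = 0 ∧
      projOf (vplus n lam ξ) * projOf (vminus n lam ξ) = 0 ∧
      projOf (vminus n lam ξ) * projOf (vplus n lam ξ) = 0 ∧
      projOf (v0 n lam ξ) * projOf (v0 n lam ξ) = projOf (v0 n lam ξ) ∧
      projOf (vplus n lam ξ) * projOf (vplus n lam ξ) = projOf (vplus n lam ξ) ∧
      projOf (vminus n lam ξ) * projOf (vminus n lam ξ) = projOf (vminus n lam ξ) ∧
      (projOf (v0 n lam ξ)).IsHermitian ∧
      (projOf (vplus n lam ξ)).IsHermitian ∧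
      (projOf (vminus n lam ξ)).IsHermitian) ∧
    (∀ i j : Fin 3, ‖projOf (v0 n lam ξ) i j‖ ≤ 1) ∧
    (∀ i j : Fin 3, ‖projOf (vplus n lam ξ) i j‖ ≤ 1) ∧
    (∀ i j : Fin 3, ‖projOf (vminus n lam ξ) i j‖ ≤ 1) := by

  have d00 := dot_00 n lam ξ hn h hpos
  have dpp := dot_pp n lam ξ hn h hpos
  have dmm := dot_mm n lam ξ hn h hpos
  have d0p := dot_0p n lam ξ hn h hpos
  have d0m := dot_0m n lam ξ hn h hpos
  have dpm := dot_pm n lam ξ hn h hpos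
  have dp0 : star (vplus n lam ξ) ⬝ᵥ v0 n lam ξ = 0 := by
    rw [dot_swap, d0p, star_zero]
  have dm0 : star (vminus n lam ξ) ⬝ᵥ v0 n lam ξ = 0 := by
    rw [dot_swap, d0m, star_zero]
  have dmp : star (vminus n lam ξ) ⬝ᵥ vplus n lam ξ = 0 := by
    rw [dot_swap, dpm, star_zero]
  have d00' := d00
  have dpp' := dpp
  have dmm' := dmm
  have d0p' := d0p
  have d0m' := d0m
  have dpm' := dpm
  have dp0' := dp0
  have dm0' := dm0
  have dmp' := dmp
  simp only [dotProduct, Pi.star_apply, Complex.star_def] at d00' dpp' dmm' d0p' d0m' dpm' dp0' dm0' dmp'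
  have hon : Orthonormal ℂ
      ![(WithLp.equiv 2 (Fin 3 → ℂ)).symm (v0 n lam ξ),
        (WithLp.equiv 2 (Fin 3 → ℂ)).symm (vplus n lam ξ),
        (WithLp.equiv 2 (Fin 3 → ℂ)).symm (vminus n lam ξ)] := by
    rw [orthonormal_iff_ite]
    intro i j
    fin_cases i <;> fin_cases j <;>
      simp [EuclideanSpace.inner_toLp_toLp, ← dotProduct_comm (star _), -inner_self_eq_norm_sq_to_K] <;>
      first | exact d00' | exact dpp' | exact dmm' | exact d0p' | exact d0m'
            | exact dpm' | exact dp0' | exact dm0' | exact dmp'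
  refine ⟨⟨hon, ?_⟩, ⟨?_, ?_, ?_, ?_, ?_, ?_, ?_, ?_, ?_, ?_,
      projOf_herm _, projOf_herm _, projOf_herm _⟩,
      entry_bound _ d00, entry_bound _ dpp, entry_bound _ dmm⟩
  · exact hon.linearIndependent.span_eq_top_of_card_eq_finrank (by simp)
  · -- sum equals 1
    set U : Matrix (Fin 3) (Fin 3) ℂ := Matrix.of fun i k =>
      ![v0 n lam ξ, vplus n lam ξ, vminus n lam ξ] k i with hU
    have hUl : Uᴴ * U = 1 := by
      ext k l
      fin_cases k <;> fin_cases l <;>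
        · simp only [hU, Matrix.mul_apply, Matrix.conjTranspose_apply, Matrix.of_apply,
            Fin.sum_univ_three, Matrix.cons_val_zero, Matrix.cons_val_one, Matrix.head_cons,
            Matrix.cons_val_two, Matrix.tail_cons, Matrix.one_apply, Fin.mk_zero, Fin.mk_one,
            Fin.isValue, reduceIte]
          first
            | simpa [dotProduct, Fin.sum_univ_three] using d00
            | simpa [dotProduct, Fin.sum_univ_three] using dpp
            | simpa [dotProduct, Fin.sum_univ_three] using dmm
            | simpa [dotProduct, Fin.sum_univ_three] using d0p
            | simpa [dotProduct, Fin.sum_univ_three] using d0m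
            | simpa [dotProduct, Fin.sum_univ_three] using dpm
            | simpa [dotProduct, Fin.sum_univ_three] using dp0
            | simpa [dotProduct, Fin.sum_univ_three] using dm0
            | simpa [dotProduct, Fin.sum_univ_three] using dmp
    have hUr : U * Uᴴ = 1 := mul_eq_one_comm.mp hUl
    calc projOf (v0 n lam ξ) + projOf (vplus n lam ξ) + projOf (vminus n lam ξ)
        = U * Uᴴ := by
          ext i j
          simp [hU, projOf, Matrix.mul_apply, Matrix.vecMulVec_apply,
            Matrix.conjTranspose_apply, Fin.sum_univ_three]
      _ = 1 := hUr
  · rw [projOf_mul, d0p, zero_smul]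
  · rw [projOf_mul, dp0, zero_smul]
  · rw [projOf_mul, d0m, zero_smul]
  · rw [projOf_mul, dm0, zero_smul]
  · rw [projOf_mul, dpm, zero_smul]
  · rw [projOf_mul, dmp, zero_smul]
  · rw [projOf_mul, d00, one_smul]; rfl
  · rw [projOf_mul, dpp, one_smul]; rfl
  · rw [projOf_mul, dmm, one_smul]; rfl
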